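/- arXiv:math/9906021 — 6 statements merged into one kernel-verified Lean document; each statement's English description precedes it below -/
import Mathlib

section
/- For every α ∈ [0,1] there exists a constant C₁ > 0 depending only on α such that for every finite Borel measure μ on ℝ and every E ∈ ℝ, D^α μ(E) ≤ C₁ · limsup_{ε→0⁺} ε^{1−α} ∫_ℝ ε/((t−E)² + ε²) dμ(t), as an inequality in [0,∞]. -/
open MeasureTheory Filter Set

/-! On `|t - E| < δ` the Poisson kernel `δ / ((t - E)² + δ²)` is at least `1 / (2δ)`, so
`μ((E - δ, E + δ)) ≤ 2δ ∫ δ / ((t - E)² + δ²) dμ(t)`. Dividing by `δ^α` bounds the quotient at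
every scale `δ` by twice the Borel-transform quantity at `ε = δ`, and the limsups follow with
`C₁ = 2`. -/

lemma one_le_two_mul_sq_div_sq_add_sq {x δ : ℝ} (hx : |x| < δ) :
    1 ≤ 2 * δ * (δ / (x ^ 2 + δ ^ 2)) := by
  have hδ : 0 < δ := (abs_nonneg x).trans_lt hx
  have hx2 : x ^ 2 < δ ^ 2 := sq_lt_sq' (abs_lt.1 hx).1 (abs_lt.1 hx).2
  rw [← mul_div_assoc, one_le_div (by positivity)]
  nlinarith

lemma measure_Ioo_le_lintegral_poisson (μ : Measure ℝ) (E : ℝ) {δ : ℝ} (hδ : 0 < δ) :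
    μ (Ioo (E - δ) (E + δ)) ≤
      ENNReal.ofReal (2 * δ) * ∫⁻ t, ENNReal.ofReal (δ / ((t - E) ^ 2 + δ ^ 2)) ∂μ := by
  rw [← lintegral_const_mul' _ _ ENNReal.ofReal_ne_top, ← lintegral_indicator_one measurableSet_Ioo]
  refine lintegral_mono fun t => ?_
  by_cases ht : t ∈ Ioo (E - δ) (E + δ)
  · rw [indicator_of_mem ht, Pi.one_apply, ← ENNReal.ofReal_mul (by positivity),
      ← ENNReal.ofReal_one]
    refine ENNReal.ofReal_le_ofReal (one_le_two_mul_sq_div_sq_add_sq ?_)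
    rw [abs_sub_lt_iff]
    constructor <;> linarith [ht.1, ht.2]
  · rw [indicator_of_notMem ht]
    exact zero_le

lemma ofReal_two_mul_div_ofReal_rpow {δ : ℝ} (hδ : 0 < δ) (α : ℝ) :
    ENNReal.ofReal (2 * δ) / ENNReal.ofReal (δ ^ α) =
      ENNReal.ofReal 2 * ENNReal.ofReal (δ ^ (1 - α)) := by
  have hpow : 0 < δ ^ α := Real.rpow_pos_of_pos hδ α
  rw [← ENNReal.ofReal_div_of_pos hpow, ← ENNReal.ofReal_mul zero_le_two,
    Real.rpow_sub hδ, Real.rpow_one, mul_div_assoc]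

lemma measure_Ioo_div_rpow_le (μ : Measure ℝ) (E α : ℝ) {δ : ℝ} (hδ : 0 < δ) :
    μ (Ioo (E - δ) (E + δ)) / ENNReal.ofReal (δ ^ α) ≤
      ENNReal.ofReal 2 * (ENNReal.ofReal (δ ^ (1 - α)) *
        ∫⁻ t, ENNReal.ofReal (δ / ((t - E) ^ 2 + δ ^ 2)) ∂μ) := by
  calc μ (Ioo (E - δ) (E + δ)) / ENNReal.ofReal (δ ^ α)
      ≤ ENNReal.ofReal (2 * δ) * (∫⁻ t, ENNReal.ofReal (δ / ((t - E) ^ 2 + δ ^ 2)) ∂μ) /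
          ENNReal.ofReal (δ ^ α) :=
        ENNReal.div_le_div_right (measure_Ioo_le_lintegral_poisson μ E hδ) _
    _ = _ := by
        rw [ENNReal.mul_div_right_comm, ofReal_two_mul_div_ofReal_rpow hδ, mul_assoc]

theorem upper_alpha_derivative_le_borel_transform_limsup_general
    (α : ℝ) :
    ∃ C₁ : ℝ, 0 < C₁ ∧
      ∀ (μ : Measure ℝ), IsFiniteMeasure μ → ∀ E : ℝ,
        limsup (fun δ : ℝ => μ (Ioo (E - δ) (E + δ)) / ENNReal.ofReal (δ ^ α))
            (nhdsWithin 0 (Ioi 0)) ≤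
          ENNReal.ofReal C₁ *
            limsup (fun ε : ℝ =>
                ENNReal.ofReal (ε ^ (1 - α)) *
                  ∫⁻ t, ENNReal.ofReal (ε / ((t - E) ^ 2 + ε ^ 2)) ∂μ)
              (nhdsWithin 0 (Ioi 0)) := by
  refine ⟨2, two_pos, fun μ _ E => ?_⟩
  rw [← ENNReal.limsup_const_mul_of_ne_top ENNReal.ofReal_ne_top]
  exact limsup_le_limsup <| eventually_nhdsWithin_of_forall fun δ hδ =>
    measure_Ioo_div_rpow_le μ E α hδ

/-- For every `α ∈ [0,1]` there is a constant `C₁ > 0` depending only on `α`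
such that for every finite Borel measure `μ` on `ℝ` and every `E ∈ ℝ`,
`D^α μ(E) ≤ C₁ · limsup_{ε→0⁺} ε^{1−α} ∫ ε/((t−E)² + ε²) dμ(t)`, as an inequality in `[0,∞]`.
Here `D^α μ(E) = limsup_{δ→0⁺} μ((E−δ,E+δ))/δ^α`. -/
theorem upper_alpha_derivative_le_borel_transform_limsup
    (α : ℝ) (hα : α ∈ Icc (0 : ℝ) 1) :
    ∃ C₁ : ℝ, 0 < C₁ ∧
      ∀ (μ : Measure ℝ), IsFiniteMeasure μ → ∀ E : ℝ,
        limsup (fun δ : ℝ => μ (Ioo (E - δ) (E + δ)) / ENNReal.ofReal (δ ^ α))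
            (nhdsWithin 0 (Ioi 0)) ≤
          ENNReal.ofReal C₁ *
            limsup (fun ε : ℝ =>
                ENNReal.ofReal (ε ^ (1 - α)) *
                  ∫⁻ t, ENNReal.ofReal (ε / ((t - E) ^ 2 + ε ^ 2)) ∂μ)
              (nhdsWithin 0 (Ioi 0)) :=
  upper_alpha_derivative_le_borel_transform_limsup_general α
end

section
/- For every α ∈ [0,1] there exists a constant C₂ > 0 depending only on α such that for every finite Borel measure μ on ℝ and every E ∈ ℝ, limsup_{ε→0⁺} ε^{1−α} ∫_ℝ ε/((t−E)² + ε²) dμ(t) ≤ C₂ · D^α μ(E), as an inequality in [0,∞]. -/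
/-!
By the layer-cake formula, `∫ P dμ = ∫₀^∞ μ {P > s} ds` for the Poisson kernel
`P t = ε / ((t - E)² + ε²)`. The superlevel set `{P > s}` lies in the interval of radius `√(ε / s)`
around `E`, and is empty once `s ≥ 1 / ε`. If `μ (E - r, E + r) ≤ L r^α` for `r < u`, the levels
`s > ε / u²` therefore contribute at most `L ∫₀^{1/ε} (ε / s)^{α/2} ds = L ε^{α-1} · 2 / (2 - α)`,
and the lower levels at most `(ε / u²) μ ℝ`. After multiplication by `ε^{1-α}` the second term
vanishes as `ε → 0⁺`, leaving `C₂ = 2 / (2 - α)`.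
-/

open MeasureTheory Filter Set ENNReal Topology

lemma lintegral_Ioo_zero_rpow {r b : ℝ} (hr : -1 < r) (hb : 0 ≤ b) :
    ∫⁻ s in Ioo 0 b, ENNReal.ofReal (s ^ r) = ENNReal.ofReal (b ^ (r + 1) / (r + 1)) := by
  have hint : IntegrableOn (fun s : ℝ => s ^ r) (Ioo 0 b) :=
    ((intervalIntegrable_iff_integrableOn_Ioc_of_le hb).1
      (intervalIntegral.intervalIntegrable_rpow' hr)).mono_set Ioo_subset_Ioc_self
  rw [← ofReal_integral_eq_lintegral_ofReal hint
      ((ae_restrict_iff' measurableSet_Ioo).2 (ae_of_all _ fun s hs => Real.rpow_nonneg hs.1.le r)),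
    ← integral_Ioc_eq_integral_Ioo, ← intervalIntegral.integral_of_le hb, integral_rpow (.inl hr),
    Real.zero_rpow (by linarith), sub_zero]

noncomputable def halfPlanePoissonKernel (E ε t : ℝ) : ℝ := ε / ((t - E) ^ 2 + ε ^ 2)

namespace halfPlanePoissonKernel

variable {E ε : ℝ}

lemma nonneg (hε : 0 ≤ ε) (t : ℝ) : 0 ≤ halfPlanePoissonKernel E ε t := by
  unfold halfPlanePoissonKernel
  positivity

lemma le_inv (hε : 0 < ε) (t : ℝ) : halfPlanePoissonKernel E ε t ≤ ε⁻¹ := by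
  rw [halfPlanePoissonKernel, div_le_iff₀ (by positivity)]
  field_simp
  nlinarith [sq_nonneg (t - E)]

lemma setOf_lt_subset_Ioo (hε : 0 < ε) {s : ℝ} (hs : 0 < s) :
    {t | s < halfPlanePoissonKernel E ε t} ⊆ Ioo (E - √(ε / s)) (E + √(ε / s)) := by
  intro t ht
  have hsq : (t - E) ^ 2 < ε / s := by
    rw [mem_ofPred_eq, halfPlanePoissonKernel, lt_div_iff₀ (by positivity)] at ht
    rw [lt_div_iff₀ hs]
    nlinarith [sq_nonneg ε]
  obtain ⟨hlo, hhi⟩ := abs_lt.1 (Real.lt_sqrt_of_sq_lt ((sq_abs _).trans_lt hsq))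
  constructor <;> linarith

variable {μ : Measure ℝ} {α u : ℝ} {L : ℝ≥0∞}

lemma measure_setOf_lt_le (hε : 0 < ε) (hu : 0 < u)
    (hL : ∀ r ∈ Ioo 0 u, μ (Ioo (E - r) (E + r)) ≤ L * ENNReal.ofReal (r ^ α))
    {s : ℝ} (hs : ε / u ^ 2 < s) :
    μ {t | s < halfPlanePoissonKernel E ε t} ≤
      (Iio ε⁻¹).indicator (fun s => L * ENNReal.ofReal (ε ^ (α / 2) * s ^ (-(α / 2)))) s := by
  have hs0 : 0 < s := lt_of_le_of_lt (by positivity) hs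
  by_cases hsε : s < ε⁻¹
  · have hr : √(ε / s) ∈ Ioo 0 u := by
      refine ⟨Real.sqrt_pos.2 (by positivity), (Real.sqrt_lt' hu).2 ?_⟩
      rw [div_lt_iff₀ (by positivity)] at hs
      rwa [div_lt_iff₀ hs0, mul_comm]
    calc μ {t | s < halfPlanePoissonKernel E ε t}
        ≤ μ (Ioo (E - √(ε / s)) (E + √(ε / s))) := measure_mono (setOf_lt_subset_Ioo hε hs0)
      _ ≤ L * ENNReal.ofReal (√(ε / s) ^ α) := hL _ hr
      _ = _ := by
        rw [indicator_of_mem (mem_Iio.2 hsε), Real.sqrt_eq_rpow, ← Real.rpow_mul (by positivity),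
          Real.div_rpow hε.le hs0.le, Real.rpow_neg hs0.le, div_eq_mul_inv, one_div_mul_eq_div]
  · have hempty : {t | s < halfPlanePoissonKernel E ε t} = ∅ :=
      eq_empty_of_forall_notMem fun t ht => hsε (lt_of_lt_of_le ht (le_inv hε t))
    rw [hempty, measure_empty]
    exact zero_le

lemma lintegral_le (hα : α < 2) (hε : 0 < ε) (hu : 0 < u)
    (hL : ∀ r ∈ Ioo 0 u, μ (Ioo (E - r) (E + r)) ≤ L * ENNReal.ofReal (r ^ α)) :
    ∫⁻ t, ENNReal.ofReal (halfPlanePoissonKernel E ε t) ∂μ ≤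
      ENNReal.ofReal (ε / u ^ 2) * μ univ + L * ENNReal.ofReal (ε ^ (α - 1) * (2 / (2 - α))) := by
  have hs₀ : 0 ≤ ε / u ^ 2 := by positivity
  have hpow : ε ^ (α / 2) * (ε⁻¹ ^ (-(α / 2) + 1) / (-(α / 2) + 1)) =
      ε ^ (α - 1) * (2 / (2 - α)) := by
    rw [Real.inv_rpow hε.le, ← Real.rpow_neg hε.le, mul_div_assoc', ← Real.rpow_add hε]
    field_simp
    ring_nf
  rw [lintegral_eq_lintegral_meas_lt μ (ae_of_all _ (nonneg hε.le)) (by unfold halfPlanePoissonKernel; fun_prop),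
    ← Ioc_union_Ioi_eq_Ioi hs₀]
  calc _ ≤ (∫⁻ s in Ioc 0 (ε / u ^ 2), μ {t | s < halfPlanePoissonKernel E ε t})
        + ∫⁻ s in Ioi (ε / u ^ 2), μ {t | s < halfPlanePoissonKernel E ε t} :=
        lintegral_union_le _ _ _
    _ ≤ (∫⁻ _ in Ioc 0 (ε / u ^ 2), μ univ)
        + ∫⁻ s in Ioi 0, (Iio ε⁻¹).indicator
            (fun s => L * ENNReal.ofReal (ε ^ (α / 2) * s ^ (-(α / 2)))) s :=
        add_le_add (lintegral_mono fun _ => measure_mono (subset_univ _))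
          ((setLIntegral_mono' measurableSet_Ioi fun _ hs => measure_setOf_lt_le hε hu hL hs).trans
            (lintegral_mono_set (Ioi_subset_Ioi hs₀)))
    _ = _ := by
        rw [setLIntegral_const, Real.volume_Ioc, sub_zero, mul_comm,
          lintegral_indicator measurableSet_Iio, Measure.restrict_restrict measurableSet_Iio,
          Iio_inter_Ioi, lintegral_const_mul _ (by fun_prop)]
        conv_lhs => simp only [ENNReal.ofReal_mul (Real.rpow_nonneg hε.le _)]
        rw [lintegral_const_mul _ (by fun_prop), lintegral_Ioo_zero_rpow (by linarith) (by positivity),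
          ← ENNReal.ofReal_mul (Real.rpow_nonneg hε.le _), hpow]

lemma limsup_rpow_mul_lintegral_le [IsFiniteMeasure μ] (hα : α < 2)
    (hL : ∀ᶠ r in 𝓝[>] 0, μ (Ioo (E - r) (E + r)) ≤ L * ENNReal.ofReal (r ^ α)) :
    limsup (fun ε : ℝ => ENNReal.ofReal (ε ^ (1 - α)) *
        ∫⁻ t, ENNReal.ofReal (halfPlanePoissonKernel E ε t) ∂μ) (𝓝[>] 0) ≤
      L * ENNReal.ofReal (2 / (2 - α)) := by
  obtain ⟨u, hu, hsub⟩ := mem_nhdsGT_iff_exists_Ioo_subset.1 hL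
  have hbound : ∀ᶠ ε in 𝓝[>] 0, ENNReal.ofReal (ε ^ (1 - α)) *
      ∫⁻ t, ENNReal.ofReal (halfPlanePoissonKernel E ε t) ∂μ ≤
        ENNReal.ofReal (ε ^ (2 - α) / u ^ 2) * μ univ + L * ENNReal.ofReal (2 / (2 - α)) := by
    filter_upwards [self_mem_nhdsWithin] with ε (hε : 0 < ε)
    have hsmall : ε ^ (1 - α) * (ε / u ^ 2) = ε ^ (2 - α) / u ^ 2 := by
      rw [mul_div_assoc', ← Real.rpow_add_one hε.ne']
      ring_nf
    have hscale : ε ^ (1 - α) * (ε ^ (α - 1) * (2 / (2 - α))) = 2 / (2 - α) := by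
      rw [← mul_assoc, ← Real.rpow_add hε]
      simp
    calc _ ≤ ENNReal.ofReal (ε ^ (1 - α)) * (ENNReal.ofReal (ε / u ^ 2) * μ univ
            + L * ENNReal.ofReal (ε ^ (α - 1) * (2 / (2 - α)))) := by
          gcongr
          exact lintegral_le hα hε hu fun r hr => hsub hr
      _ = _ := by
          rw [mul_add, ← mul_assoc, ← ENNReal.ofReal_mul (by positivity), hsmall, mul_left_comm,
            ← ENNReal.ofReal_mul (by positivity), hscale]
  have hsmall : Tendsto (fun ε : ℝ => ε ^ (2 - α) / u ^ 2) (𝓝[>] 0) (𝓝 0) := by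
    have := ((Real.continuous_rpow_const (by linarith : 0 ≤ 2 - α)).tendsto' 0 0
      (Real.zero_rpow (by linarith))).div_const (u ^ 2)
    simpa using this.mono_left nhdsWithin_le_nhds
  have hlim := (ENNReal.Tendsto.mul_const (ENNReal.tendsto_ofReal hsmall)
    (.inr (measure_ne_top μ univ))).add_const (L * ENNReal.ofReal (2 / (2 - α)))
  rw [ENNReal.ofReal_zero, zero_mul, zero_add] at hlim
  exact (limsup_le_limsup hbound).trans_eq hlim.limsup_eq

end halfPlanePoissonKernel

/-- For every `α ∈ [0,1]` there is a constant `C₂ > 0` depending only on `α`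
such that for every finite Borel measure `μ` on `ℝ` and every `E ∈ ℝ`,
`limsup_{ε→0⁺} ε^{1−α} ∫ ε/((t−E)² + ε²) dμ(t) ≤ C₂ · D^α μ(E)`, as an inequality in `[0,∞]`.
Here `D^α μ(E) = limsup_{δ→0⁺} μ((E−δ,E+δ))/δ^α`. -/
theorem borel_transform_limsup_le_upper_alpha_derivative
    (α : ℝ) (hα : α ∈ Icc (0 : ℝ) 1) :
    ∃ C₂ : ℝ, 0 < C₂ ∧
      ∀ (μ : Measure ℝ), IsFiniteMeasure μ → ∀ E : ℝ,
        limsup (fun ε : ℝ =>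
            ENNReal.ofReal (ε ^ (1 - α)) *
              ∫⁻ t, ENNReal.ofReal (ε / ((t - E) ^ 2 + ε ^ 2)) ∂μ)
          (nhdsWithin 0 (Ioi 0)) ≤
        ENNReal.ofReal C₂ *
          limsup (fun δ : ℝ => μ (Ioo (E - δ) (E + δ)) / ENNReal.ofReal (δ ^ α))
            (nhdsWithin 0 (Ioi 0)) := by
  have hα2 : α < 2 := by linarith [hα.2]
  have hC : 0 < 2 / (2 - α) := div_pos two_pos (by linarith)
  refine ⟨2 / (2 - α), hC, fun μ _ E => ?_⟩
  refine ENNReal.le_mul_of_forall_lt (.inl (ENNReal.ofReal_pos.2 hC).ne') (.inl ofReal_ne_top)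
    fun c hc L hL => ?_
  have hball : ∀ᶠ r in 𝓝[>] 0, μ (Ioo (E - r) (E + r)) ≤ L * ENNReal.ofReal (r ^ α) := by
    filter_upwards [eventually_lt_of_limsup_lt hL, self_mem_nhdsWithin] with r hr (hr0 : 0 < r)
    exact (ENNReal.div_le_iff (ENNReal.ofReal_pos.2 (Real.rpow_pos_of_pos hr0 α)).ne'
      ofReal_ne_top).1 hr.le
  calc _ ≤ L * ENNReal.ofReal (2 / (2 - α)) := halfPlanePoissonKernel.limsup_rpow_mul_lintegral_le hα2 hball
    _ ≤ c * L := by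
      rw [mul_comm]
      gcongr
end

section
/- Let d ≥ 1, Ω ⊆ ℤ^d, and let f, g : ℤ^d → ℂ vanish outside Ω. Then for every integer R ≥ 1, Σ_{r=1}^R | w_{∂(C_r ∩ Ω)}[f, g] | ≤ 2d · (Σ_{n ∈ C_{R+1} ∩ Ω} |f(n)|²)^{1/2} · (Σ_{n ∈ C_{R+1} ∩ Ω} |g(n)|²)^{1/2}. -/
/-- Two points `m, n ∈ ℤ^d` are neighbors if `Σ_i |m_i − n_i| = 1`. -/
def IsNbr {d : ℕ} (m n : Fin d → ℤ) : Prop := (∑ i, |m i - n i|) = 1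

/-- The cube `C_R = {n ∈ ℤ^d : |n_i| ≤ R for all i}`. -/
def cube (d : ℕ) (R : ℤ) : Set (Fin d → ℤ) := {n | ∀ i, |n i| ≤ R}

/-- The discrete Wronskian over `∂S`:
`w_{∂S}[f,g] = Σ_{m ∈ ∂S} ( f(m) Σ_{l ∈ N_S(m)} g(l) − g(m) Σ_{l ∈ N_S(m)} f(l) )`,
where `∂S = {m ∉ S : m has a neighbor in S}` and `N_S(m) = {l ∈ S : l ~ m}`. -/
noncomputable def wron {d : ℕ} (S : Set (Fin d → ℤ)) (f g : (Fin d → ℤ) → ℂ) : ℂ :=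
  ∑' m : {m : Fin d → ℤ // m ∉ S ∧ ∃ l ∈ S, IsNbr l m},
    (f m * (∑' l : {l : Fin d → ℤ // l ∈ S ∧ IsNbr l m}, g l)
      - g m * (∑' l : {l : Fin d → ℤ // l ∈ S ∧ IsNbr l m}, f l))

/-!
As `f` and `g` vanish off `Ω`, the cube `C_r ∩ Ω` may be replaced by `C_r`. The Wronskian over
`∂C_r` is a sum of `f m g l - g m f l` over neighbours `l ∈ C_r`, `m ∉ C_r`, so `|w_r|` is at most
the sum of `|f p₁| |g p₂|` over the ordered pairs of neighbours separated by `C_r`. Such a pair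
lies in `C_{r+1}`, so it is separated by no other cube: these sets of pairs are disjoint in `r`,
and the total is bounded by the sum over all pairs of neighbours in `C_{R+1}`. Cauchy–Schwarz,
together with the fact that a point has at most `2d` neighbours, gives the factor `2d`.
-/

open Finset Function
open scoped Classical

theorem tsum_subtype_eq_sum_filter {α M : Type*} [AddCommMonoid M] [TopologicalSpace M]
    (P : α → Prop) [DecidablePred P] (B : Finset α) (hB : ∀ x, P x → x ∈ B) (F : α → M) :
    ∑' x : {x // P x}, F x = ∑ x ∈ B with P x, F x := by
  rw [← Finset.tsum_subtype]
  exact (Equiv.subtypeEquivRight (p := P) (q := (· ∈ B.filter P)) fun x =>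
    by rw [mem_filter]; exact ⟨fun h => ⟨hB x h, h⟩, And.right⟩).tsum_eq fun x => F x

theorem sum_filter_product_fst_le {α : Type*} (B : Finset α) (r : α → α → Prop) {k : ℕ}
    (hk : ∀ x, #{y ∈ B | r x y} ≤ k) {F : α → ℝ} (hF : ∀ x, 0 ≤ F x) :
    ∑ p ∈ B ×ˢ B with r p.1 p.2, F p.1 ≤ k * ∑ x ∈ B, F x := by
  rw [sum_finset_product _ B fun x => {y ∈ B | r x y}, mul_sum]
  · gcongr with x
    simp only [sum_const, nsmul_eq_mul]
    gcongr
    · exact hF x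
    · exact_mod_cast hk x
  · intro p
    simp only [mem_filter, mem_product]
    tauto

theorem sum_filter_product_mul_le_sqrt {α : Type*} (B : Finset α) (r : α → α → Prop)
    (hr : ∀ x y, r x y → r y x) {k : ℕ} (hk : ∀ x, #{y ∈ B | r x y} ≤ k) (a b : α → ℝ) :
    ∑ p ∈ B ×ˢ B with r p.1 p.2, a p.1 * b p.2 ≤
      k * √(∑ x ∈ B, a x ^ 2) * √(∑ x ∈ B, b x ^ 2) := by
  have hswap :
      ∑ p ∈ B ×ˢ B with r p.1 p.2, b p.2 ^ 2 = ∑ p ∈ B ×ˢ B with r p.1 p.2, b p.1 ^ 2 :=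
    sum_nbij' Prod.swap Prod.swap
      (fun p hp => by simp only [mem_filter, mem_product] at hp ⊢; exact ⟨hp.1.symm, hr _ _ hp.2⟩)
      (fun p hp => by simp only [mem_filter, mem_product] at hp ⊢; exact ⟨hp.1.symm, hr _ _ hp.2⟩)
      (by simp) (by simp) (by simp)
  calc ∑ p ∈ B ×ˢ B with r p.1 p.2, a p.1 * b p.2
      ≤ √(∑ p ∈ B ×ˢ B with r p.1 p.2, a p.1 ^ 2) * √(∑ p ∈ B ×ˢ B with r p.1 p.2, b p.2 ^ 2) :=
        Real.sum_mul_le_sqrt_mul_sqrt _ _ _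
    _ ≤ √(k * ∑ x ∈ B, a x ^ 2) * √(k * ∑ x ∈ B, b x ^ 2) := by
        rw [hswap]
        gcongr <;> exact sum_filter_product_fst_le B r hk fun x => sq_nonneg _
    _ = k * √(∑ x ∈ B, a x ^ 2) * √(∑ x ∈ B, b x ^ 2) := by
        rw [Real.sqrt_mul (by positivity), Real.sqrt_mul (by positivity)]
        linear_combination (√(∑ x ∈ B, a x ^ 2) * √(∑ x ∈ B, b x ^ 2)) *
          Real.mul_self_sqrt (Nat.cast_nonneg k)

section Lattice

variable {d : ℕ}

namespace IsNbr

variable {l m : Fin d → ℤ}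

theorem symm (h : IsNbr l m) : IsNbr m l := by
  unfold IsNbr at *
  simpa only [abs_sub_comm] using h

theorem abs_sub_le_one (h : IsNbr l m) (i : Fin d) : |l i - m i| ≤ 1 :=
  h ▸ single_le_sum (f := fun j => |l j - m j|) (fun _ _ => abs_nonneg _) (mem_univ i)

theorem mem_cube_add_one {R : ℤ} (h : IsNbr l m) (hl : l ∈ cube d R) : m ∈ cube d (R + 1) :=
  fun i => by linarith [abs_sub_abs_le_abs_sub (m i) (l i), abs_sub_comm (m i) (l i),
    h.abs_sub_le_one i, hl i]

theorem exists_eq_add_single (h : IsNbr l m) :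
    ∃ i, ∃ s ∈ ({1, -1} : Finset ℤ), m = l + Pi.single i s := by
  obtain ⟨i, hi⟩ : ∃ i, l i ≠ m i := by
    by_contra! hc
    simp [IsNbr, hc] at h
  have hi_one : 1 ≤ |l i - m i| := Int.one_le_abs (sub_ne_zero.2 hi)
  have hrest : ∑ j ∈ univ.erase i, |l j - m j| = 0 := by
    have := add_sum_erase univ (fun j => |l j - m j|) (mem_univ i)
    unfold IsNbr at h
    linarith [sum_nonneg fun j (_ : j ∈ univ.erase i) => abs_nonneg (l j - m j)]
  refine ⟨i, m i - l i, ?_, funext fun j => ?_⟩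
  · have : |m i - l i| = 1 := by
      rw [abs_sub_comm]; exact le_antisymm (h.abs_sub_le_one i) hi_one
    rcases (abs_eq zero_le_one).1 this with h1 | h1 <;> simp [h1]
  · by_cases hj : j = i
    · subst hj; simp
    · have := (sum_eq_zero_iff_of_nonneg fun _ _ => abs_nonneg _).1 hrest j
        (mem_erase.2 ⟨hj, mem_univ j⟩)
      simp [hj, sub_eq_zero.1 (abs_eq_zero.1 this)]

end IsNbr

theorem card_filter_isNbr_le (B : Finset (Fin d → ℤ)) (l : Fin d → ℤ) :
    #{m ∈ B | IsNbr l m} ≤ 2 * d :=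
  calc #{m ∈ B | IsNbr l m}
      ≤ #((univ ×ˢ {1, -1}).image fun p : Fin d × ℤ => l + Pi.single p.1 p.2) := by
        refine card_le_card fun m hm => ?_
        obtain ⟨i, s, hs, rfl⟩ := (mem_filter.1 hm).2.exists_eq_add_single
        exact mem_image.2 ⟨(i, s), mem_product.2 ⟨mem_univ i, hs⟩, rfl⟩
    _ ≤ #(univ ×ˢ ({1, -1} : Finset ℤ)) := card_image_le
    _ = 2 * d := by simp [card_product, mul_comm]

theorem cube_mono {R R' : ℤ} (h : R ≤ R') : cube d R ⊆ cube d R' :=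
  fun _ hx i => (hx i).trans h

noncomputable def cubeFinset (d : ℕ) (R : ℤ) : Finset (Fin d → ℤ) :=
  Fintype.piFinset fun _ => Icc (-R) R

theorem mem_cubeFinset {R : ℤ} {x : Fin d → ℤ} : x ∈ cubeFinset d R ↔ x ∈ cube d R := by
  simp [cubeFinset, cube, abs_le]

noncomputable def nbrPairs (B : Finset (Fin d → ℤ)) : Finset ((Fin d → ℤ) × (Fin d → ℤ)) :=
  {p ∈ B ×ˢ B | IsNbr p.1 p.2}

noncomputable def crossingPairs (B : Finset (Fin d → ℤ)) (S : Set (Fin d → ℤ)) :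
    Finset ((Fin d → ℤ) × (Fin d → ℤ)) :=
  {p ∈ nbrPairs B | p.1 ∈ S ↔ p.2 ∉ S}

section Wronskian

variable (S : Set (Fin d → ℤ)) (f g : (Fin d → ℤ) → ℂ) {B : Finset (Fin d → ℤ)}

theorem wron_eq_sum (hS : S ⊆ B) (hB : ∀ l ∈ S, ∀ m, IsNbr l m → m ∈ B) :
    wron S f g = ∑ p ∈ nbrPairs B with p.1 ∈ S ∧ p.2 ∉ S, (f p.2 * g p.1 - g p.2 * f p.1) := by
  have inner : ∀ m (F : (Fin d → ℤ) → ℂ),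
      ∑' l : {l // l ∈ S ∧ IsNbr l m}, F l = ∑ l ∈ B with l ∈ S ∧ IsNbr l m, F l :=
    fun m F => tsum_subtype_eq_sum_filter _ B (fun l hl => hS hl.1) F
  let φ m := f m * ∑' l : {l // l ∈ S ∧ IsNbr l m}, g l
    - g m * ∑' l : {l // l ∈ S ∧ IsNbr l m}, f l
  change ∑' m : {m // m ∉ S ∧ ∃ l ∈ S, IsNbr l m}, φ m = _
  rw [tsum_subtype_eq_sum_filter _ B (fun m ⟨_, l, hl, hlm⟩ => hB l hl m hlm) φ]
  simp only [φ, inner]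
  rw [sum_finset_product_right _ {m ∈ B | m ∉ S ∧ ∃ l ∈ S, IsNbr l m}
      fun m => {l ∈ B | l ∈ S ∧ IsNbr l m}]
  · simp only [mul_sum, ← sum_sub_distrib]
  · rintro ⟨l, m⟩
    simp only [nbrPairs, mem_filter, mem_product]
    constructor
    · rintro ⟨⟨⟨hl, hm⟩, hlm⟩, hlS, hmS⟩
      exact ⟨⟨hm, hmS, l, hlS, hlm⟩, hl, hlS, hlm⟩
    · rintro ⟨⟨hm, hmS, -⟩, hl, hlS, hlm⟩
      exact ⟨⟨⟨hl, hm⟩, hlm⟩, hlS, hmS⟩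

theorem wron_inter_eq_wron {Ω : Set (Fin d → ℤ)} (hf : ∀ n ∉ Ω, f n = 0)
    (hg : ∀ n ∉ Ω, g n = 0) (hS : S ⊆ B) (hB : ∀ l ∈ S, ∀ m, IsNbr l m → m ∈ B) :
    wron (S ∩ Ω) f g = wron S f g := by
  rw [wron_eq_sum (S ∩ Ω) f g (Set.inter_subset_left.trans hS) fun l hl => hB l hl.1,
    wron_eq_sum S f g hS hB, sum_filter, sum_filter]
  refine sum_congr rfl fun p _ => ?_
  by_cases h1 : p.1 ∈ Ω <;> by_cases h2 : p.2 ∈ Ω <;> simp [h1, h2, hf, hg]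

theorem norm_wron_le (hS : S ⊆ B) (hB : ∀ l ∈ S, ∀ m, IsNbr l m → m ∈ B) :
    ‖wron S f g‖ ≤ ∑ p ∈ crossingPairs B S, ‖f p.1‖ * ‖g p.2‖ := by
  have hin : {p ∈ crossingPairs B S | p.1 ∈ S} = {p ∈ nbrPairs B | p.1 ∈ S ∧ p.2 ∉ S} := by
    ext p
    simp only [crossingPairs, mem_filter]
    tauto
  have hout : ∑ p ∈ crossingPairs B S with p.1 ∉ S, ‖f p.1‖ * ‖g p.2‖ =
      ∑ p ∈ nbrPairs B with p.1 ∈ S ∧ p.2 ∉ S, ‖f p.2‖ * ‖g p.1‖ := by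
    refine sum_nbij' Prod.swap Prod.swap (fun p hp => ?_) (fun p hp => ?_) (by simp) (by simp)
      (by simp)
    all_goals simp only [crossingPairs, nbrPairs, mem_filter, mem_product, Prod.fst_swap,
      Prod.snd_swap] at hp ⊢
    · have := hp.1.1.2.symm
      tauto
    · have := hp.1.2.symm
      tauto
  rw [wron_eq_sum S f g hS hB,
    ← sum_filter_add_sum_filter_not (crossingPairs B S) fun p => p.1 ∈ S, hin, hout,
    ← sum_add_distrib]
  refine norm_sum_le_of_le _ fun p _ => (norm_sub_le _ _).trans_eq ?_
  rw [norm_mul, norm_mul]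
  ring

end Wronskian

theorem mem_cube_add_one_of_mem_crossingPairs {B : Finset (Fin d → ℤ)} {R : ℤ}
    {p : (Fin d → ℤ) × (Fin d → ℤ)} (hp : p ∈ crossingPairs B (cube d R)) :
    p.1 ∈ cube d (R + 1) ∧ p.2 ∈ cube d (R + 1) := by
  simp only [crossingPairs, nbrPairs, mem_filter] at hp
  obtain ⟨⟨-, hnbr⟩, hcross⟩ := hp
  have hR : cube d R ⊆ cube d (R + 1) := cube_mono (by omega)
  by_cases h1 : p.1 ∈ cube d R
  · exact ⟨hR h1, hnbr.mem_cube_add_one h1⟩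
  · have h2 : p.2 ∈ cube d R := not_not.1 (mt hcross.2 h1)
    exact ⟨hnbr.symm.mem_cube_add_one h2, hR h2⟩

theorem pairwise_disjoint_crossingPairs_cube (B : Finset (Fin d → ℤ)) :
    Pairwise (Disjoint on fun r : ℕ => crossingPairs B (cube d r)) := by
  refine (pairwise_disjoint_on _).2 fun r r' hrr' => disjoint_left.2 fun p hp hp' => ?_
  have hsub : cube d (r + 1) ⊆ cube d r' := cube_mono (by omega)
  obtain ⟨h1, h2⟩ := mem_cube_add_one_of_mem_crossingPairs hp
  exact (mem_filter.1 hp').2.1 (hsub h1) (hsub h2)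

theorem tsum_cube_inter_eq_sum {Ω : Set (Fin d → ℤ)} {F : (Fin d → ℤ) → ℝ}
    (hF : ∀ n ∉ Ω, F n = 0) (R : ℤ) :
    ∑' n : ↥(cube d R ∩ Ω), F n = ∑ n ∈ cubeFinset d R, F n := by
  rw [tsum_subtype_eq_sum_filter _ (cubeFinset d R) fun n hn => mem_cubeFinset.2 hn.1]
  exact sum_filter_of_ne fun n hn hne =>
    ⟨mem_cubeFinset.1 hn, by_contra fun h => hne (hF n h)⟩

end Lattice

theorem discrete_wronskian_sum_bound_general
    (d : ℕ) (Ω : Set (Fin d → ℤ))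
    (f g : (Fin d → ℤ) → ℂ)
    (hf : ∀ n, n ∉ Ω → f n = 0) (hg : ∀ n, n ∉ Ω → g n = 0)
    (R : ℕ) :
    ∑ r ∈ Finset.Icc 1 R, ‖wron (cube d (r : ℤ) ∩ Ω) f g‖ ≤
      2 * d * Real.sqrt (∑' n : ↥(cube d ((R : ℤ) + 1) ∩ Ω), ‖f n‖ ^ 2)
            * Real.sqrt (∑' n : ↥(cube d ((R : ℤ) + 1) ∩ Ω), ‖g n‖ ^ 2) := by
  set B := cubeFinset d (R + 1)
  have hS : ∀ r ∈ Icc 1 R, cube d r ⊆ B := fun r hr x hx =>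
    mem_cubeFinset.2 (cube_mono (by simp only [mem_Icc] at hr; omega) hx)
  have hB : ∀ r ∈ Icc 1 R, ∀ l ∈ cube d r, ∀ m, IsNbr l m → m ∈ B := fun r hr l hl m hlm =>
    mem_cubeFinset.2 (cube_mono (by simp only [mem_Icc] at hr; omega) (hlm.mem_cube_add_one hl))
  calc ∑ r ∈ Icc 1 R, ‖wron (cube d r ∩ Ω) f g‖
      = ∑ r ∈ Icc 1 R, ‖wron (cube d r) f g‖ := sum_congr rfl fun r hr => by
        rw [wron_inter_eq_wron _ f g hf hg (hS r hr) (hB r hr)]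
    _ ≤ ∑ r ∈ Icc 1 R, ∑ p ∈ crossingPairs B (cube d r), ‖f p.1‖ * ‖g p.2‖ :=
        sum_le_sum fun r hr => norm_wron_le _ f g (hS r hr) (hB r hr)
    _ = ∑ p ∈ (Icc 1 R).biUnion fun r => crossingPairs B (cube d r), ‖f p.1‖ * ‖g p.2‖ :=
        (sum_biUnion ((pairwise_disjoint_crossingPairs_cube B).set_pairwise _)).symm
    _ ≤ ∑ p ∈ nbrPairs B, ‖f p.1‖ * ‖g p.2‖ :=
        sum_le_sum_of_subset_of_nonneg (biUnion_subset.2 fun r _ => filter_subset _ _)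
          fun _ _ _ => by positivity
    _ ≤ (2 * d : ℕ) * √(∑ n ∈ B, ‖f n‖ ^ 2) * √(∑ n ∈ B, ‖g n‖ ^ 2) :=
        sum_filter_product_mul_le_sqrt B IsNbr (fun _ _ => IsNbr.symm) (card_filter_isNbr_le B)
          (‖f ·‖) (‖g ·‖)
    _ = _ := by
        push_cast
        rw [tsum_cube_inter_eq_sum (F := fun n => ‖f n‖ ^ 2) (by simp +contextual [hf]),
          tsum_cube_inter_eq_sum (F := fun n => ‖g n‖ ^ 2) (by simp +contextual [hg])]

/-- For `f, g` vanishing outside `Ω ⊆ ℤ^d` and every integer `R ≥ 1`,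
`Σ_{r=1}^R |w_{∂(C_r ∩ Ω)}[f,g]| ≤ 2d · ‖f‖_{ℓ²(C_{R+1} ∩ Ω)} · ‖g‖_{ℓ²(C_{R+1} ∩ Ω)}`. -/
theorem discrete_wronskian_sum_bound
    (d : ℕ) (hd : 1 ≤ d) (Ω : Set (Fin d → ℤ))
    (f g : (Fin d → ℤ) → ℂ)
    (hf : ∀ n, n ∉ Ω → f n = 0) (hg : ∀ n, n ∉ Ω → g n = 0)
    (R : ℕ) (hR : 1 ≤ R) :
    ∑ r ∈ Finset.Icc 1 R, ‖wron (cube d (r : ℤ) ∩ Ω) f g‖ ≤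
      2 * d * Real.sqrt (∑' n : ↥(cube d ((R : ℤ) + 1) ∩ Ω), ‖f n‖ ^ 2)
            * Real.sqrt (∑' n : ↥(cube d ((R : ℤ) + 1) ∩ Ω), ‖g n‖ ^ 2) :=
  discrete_wronskian_sum_bound_general d Ω f g hf hg R
end

section
/- Let 𝓗 be a complex Hilbert space, K ⊆ 𝓗 a closed subspace and P the orthogonal projection onto K. Let ψ₁, ψ₂ ∈ 𝓗 satisfy ⟨ψ₁, ψ₂⟩ = 0 and ‖ψ₁ + ψ₂‖ = 1, and set ψ = ψ₁ + ψ₂. Let U : ℝ → B(𝓗) be a family of operators with ‖U_t x‖ = ‖x‖ for all t ∈ ℝ and x ∈ 𝓗, such that t ↦ U_t ψ₁ and t ↦ U_t ψ are continuous. Let T > 0 and suppose (1/T) ∫₀^T ‖P(U_t ψ₁)‖² dt ≤ ‖ψ₁‖⁴/64. Then (1/T) ∫₀^T ‖U_t ψ − P(U_t ψ)‖² dt ≥ ‖ψ₁‖²/2. -/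
open MeasureTheory Set

/-! Let `a = ‖ψ₁‖`. Since `U_t` preserves inner products, `⟨U_t ψ₁, U_t ψ⟩ = ⟨ψ₁, ψ⟩ = a²`.
Splitting `U_t ψ = (U_t ψ - P U_t ψ) + P U_t ψ` and moving `P` across the inner product gives
`a² ≤ a ‖U_t ψ - P U_t ψ‖ + ‖P U_t ψ₁‖` for every `t`. Squaring (with Young's inequality) and
averaging over `[0, T]`, the hypothesis makes the projected term cost at most `a⁴/8`, which leaves
an average of at least `49 a² / 64` for `‖U_t ψ - P U_t ψ‖²`. -/

open scoped InnerProductSpace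

section Projection

variable {𝕜 E : Type*} [RCLike 𝕜] [NormedAddCommGroup E] [InnerProductSpace 𝕜 E]

theorem re_inner_le_norm_mul_norm_sub_starProjection_add (K : Submodule 𝕜 E)
    [K.HasOrthogonalProjection] (u v : E) :
    RCLike.re ⟪u, v⟫_𝕜 ≤ ‖u‖ * ‖v - K.starProjection v‖ + ‖K.starProjection u‖ * ‖v‖ := by
  have hsplit : ⟪u, v⟫_𝕜 = ⟪u, v - K.starProjection v⟫_𝕜 + ⟪K.starProjection u, v⟫_𝕜 := by
    rw [Submodule.inner_starProjection_left_eq_right, inner_sub_right, sub_add_cancel]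
  rw [hsplit, map_add]
  exact add_le_add (re_inner_le_norm _ _) (re_inner_le_norm _ _)

theorem sq_norm_le_norm_mul_norm_sub_starProjection_add (K : Submodule 𝕜 E)
    [K.HasOrthogonalProjection] {u v : E} (hv : ‖v‖ = 1) (huv : RCLike.re ⟪u, v⟫_𝕜 = ‖u‖ ^ 2) :
    ‖u‖ ^ 2 ≤ ‖u‖ * ‖v - K.starProjection v‖ + ‖K.starProjection u‖ := by
  simpa [huv, hv] using re_inner_le_norm_mul_norm_sub_starProjection_add K u v

end Projection

theorem seven_mul_pow_four_le_of_sq_le_mul_add {a f g : ℝ} (h : a ^ 2 ≤ a * f + g) :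
    7 * a ^ 4 ≤ 8 * a ^ 2 * f ^ 2 + 56 * g ^ 2 := by
  have hsq : (a ^ 2) ^ 2 ≤ (a * f + g) ^ 2 := pow_le_pow_left₀ (sq_nonneg a) h 2
  -- Young: `14 a f g ≤ a² f² + 49 g²`
  nlinarith [sq_nonneg (a * f - 7 * g)]

theorem time_average_outside_projection_lower_bound_general
    {𝓗 : Type*} [NormedAddCommGroup 𝓗] [InnerProductSpace ℂ 𝓗]
    (K : Submodule ℂ 𝓗) [K.HasOrthogonalProjection]
    (ψ₁ ψ₂ : 𝓗) (horth : (inner ℂ ψ₁ ψ₂ : ℂ) = 0) (hnorm : ‖ψ₁ + ψ₂‖ = 1)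
    (U : ℝ → 𝓗 →L[ℂ] 𝓗) (hU : ∀ (t : ℝ) (x : 𝓗), ‖U t x‖ = ‖x‖)
    (hc₁ : Continuous fun t => U t ψ₁)
    (hc : Continuous fun t => U t (ψ₁ + ψ₂))
    (T : ℝ) (hT : 0 < T)
    (hbound : (1 / T) * ∫ t in Ioc (0 : ℝ) T,
        ‖(K.orthogonalProjectionOnto (U t ψ₁) : 𝓗)‖ ^ 2 ≤ ‖ψ₁‖ ^ 4 / 64) :
    (1 / T) * ∫ t in Ioc (0 : ℝ) T,
        ‖U t (ψ₁ + ψ₂) - (K.orthogonalProjectionOnto (U t (ψ₁ + ψ₂)) : 𝓗)‖ ^ 2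
      ≥ ‖ψ₁‖ ^ 2 / 2 := by
  simp only [← Submodule.starProjection_apply] at hbound ⊢
  set a := ‖ψ₁‖
  set F := fun t => ‖U t (ψ₁ + ψ₂) - K.starProjection (U t (ψ₁ + ψ₂))‖ ^ 2
  set G := fun t => ‖K.starProjection (U t ψ₁)‖ ^ 2
  have hF : IntegrableOn F (Ioc 0 T) :=
    ((hc.sub (K.starProjection.continuous.comp hc)).norm.pow 2).integrableOn_Ioc
  have hG : IntegrableOn G (Ioc 0 T) :=
    ((K.starProjection.continuous.comp hc₁).norm.pow 2).integrableOn_Ioc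
  have hpointwise (t : ℝ) : 7 * a ^ 4 ≤ 8 * a ^ 2 * F t + 56 * G t := by
    have hinner : RCLike.re ⟪U t ψ₁, U t (ψ₁ + ψ₂)⟫_ℂ = ‖U t ψ₁‖ ^ 2 := by
      have hiso : ⟪U t ψ₁, U t (ψ₁ + ψ₂)⟫_ℂ = ⟪ψ₁, ψ₁ + ψ₂⟫_ℂ :=
        LinearIsometry.inner_map_map ⟨(U t).toLinearMap, hU t⟩ _ _
      rw [hiso, inner_add_right, horth, add_zero, hU, inner_self_eq_norm_sq]
    have key := sq_norm_le_norm_mul_norm_sub_starProjection_add K (by rw [hU, hnorm]) hinner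
    rw [hU] at key
    simpa only [F, G, mul_assoc] using seven_mul_pow_four_le_of_sq_le_mul_add key
  have hintegral :
      7 * a ^ 4 * T ≤ 8 * a ^ 2 * (∫ t in Ioc 0 T, F t) + 56 * ∫ t in Ioc 0 T, G t := by
    have := setIntegral_ge_of_const_le_real measurableSet_Ioc measure_Ioc_lt_top.ne
      (fun t _ => hpointwise t) ((hF.const_mul _).add (hG.const_mul _))
    rwa [integral_add (hF.const_mul _) (hG.const_mul _), integral_const_mul, integral_const_mul,
      Real.volume_real_Ioc_of_le hT.le, sub_zero] at this
  rw [one_div, inv_mul_le_iff₀ hT] at hbound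
  rw [ge_iff_le, one_div, le_inv_mul_iff₀ hT]
  rcases (sq_nonneg a).eq_or_lt with ha | ha
  · rw [← ha, zero_div, mul_zero]
    exact setIntegral_nonneg measurableSet_Ioc fun t _ => sq_nonneg _
  · refine le_of_mul_le_mul_left ?_ (by positivity : (0 : ℝ) < 8 * a ^ 2)
    linarith [mul_pos (mul_pos ha ha) hT]

/-- Let `K` be a closed subspace of a complex Hilbert space `𝓗` with
orthogonal projection `P`, let `ψ = ψ₁ + ψ₂` with `⟨ψ₁, ψ₂⟩ = 0` and `‖ψ‖ = 1`, and let
`U_t` be norm-preserving operators with `t ↦ U_t ψ₁` and `t ↦ U_t ψ` continuous. If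
`(1/T) ∫₀^T ‖P(U_t ψ₁)‖² dt ≤ ‖ψ₁‖⁴/64`, then
`(1/T) ∫₀^T ‖U_t ψ − P(U_t ψ)‖² dt ≥ ‖ψ₁‖²/2`. -/
theorem time_average_outside_projection_lower_bound
    {𝓗 : Type*} [NormedAddCommGroup 𝓗] [InnerProductSpace ℂ 𝓗] [CompleteSpace 𝓗]
    (K : Submodule ℂ 𝓗) (hK : IsClosed (K : Set 𝓗)) [K.HasOrthogonalProjection]
    (ψ₁ ψ₂ : 𝓗) (horth : (inner ℂ ψ₁ ψ₂ : ℂ) = 0) (hnorm : ‖ψ₁ + ψ₂‖ = 1)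
    (U : ℝ → 𝓗 →L[ℂ] 𝓗) (hU : ∀ (t : ℝ) (x : 𝓗), ‖U t x‖ = ‖x‖)
    (hc₁ : Continuous fun t => U t ψ₁)
    (hc : Continuous fun t => U t (ψ₁ + ψ₂))
    (T : ℝ) (hT : 0 < T)
    (hbound : (1 / T) * ∫ t in Ioc (0 : ℝ) T,
        ‖(K.orthogonalProjectionOnto (U t ψ₁) : 𝓗)‖ ^ 2 ≤ ‖ψ₁‖ ^ 4 / 64) :
    (1 / T) * ∫ t in Ioc (0 : ℝ) T,
        ‖U t (ψ₁ + ψ₂) - (K.orthogonalProjectionOnto (U t (ψ₁ + ψ₂)) : 𝓗)‖ ^ 2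
      ≥ ‖ψ₁‖ ^ 2 / 2 :=
  time_average_outside_projection_lower_bound_general K ψ₁ ψ₂ horth hnorm U hU hc₁ hc T hT hbound
end

section
/- Let α ∈ (0,1] and let μ be a finite Borel measure on ℝ which is UαH with constant C > 0. Then there exists a constant C₁ > 0, depending only on α and C, such that for every Borel measurable f : ℝ → ℂ with ∫ |f|² dμ < ∞ and every T > 0, (1/T) ∫₀^T | ∫_ℝ e^{−ixt} f(x) dμ(x) |² dt ≤ C₁ (∫ |f|² dμ) T^{−α}. -/
/-!
Strichartz's Gaussian trick. On `(0, T]` the weight `e^{-(t/T)²}` is at least `1/e`, so it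
suffices to bound `∫ e^{-(t/T)²} |F(t)|² dt`, where `F` is the Fourier transform of `f μ`.
Expanding the square and integrating in `t` first turns this into
`∫∫ K_T(x - y) f(x) conj (f y) dμ(x) dμ(y)` with the Gaussian kernel
`K_T(u) = √π T e^{-(uT)²/4}`, which a Schur test bounds by `sup_x ∫ K_T(x - y) dμ(y) · ‖f‖²₂`.
Since `K_T ≤ min (√π T) (4√π / (T u²))`, the layer-cake formula and `μ(I) ≤ C |I|^α` give
`∫ K_T(x - y) dμ(y) = O(T^{1-α})`.
-/

open MeasureTheory Set
open Complex (I)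
open scoped ENNReal Real Complex ComplexConjugate

def IsUniformlyHolder (μ : Measure ℝ) (α C : ℝ) : Prop :=
  ∀ a b : ℝ, μ (Icc a b) ≤ ENNReal.ofReal (C * |b - a| ^ α)

namespace IsUniformlyHolder

variable {μ : Measure ℝ} {α C : ℝ}

lemma measure_lt_comp_sub_le (hμ : IsUniformlyHolder μ α C) {k : ℝ → ℝ} {b : ℝ} (hb : 0 ≤ b)
    (hkb : ∀ u ≠ 0, k u ≤ b / u ^ 2) (x : ℝ) {s : ℝ} (hs : 0 < s) :
    μ {y | s < k (x - y)} ≤ ENNReal.ofReal (C * 2 ^ α * b ^ (α / 2) * s ^ (-(α / 2))) := by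
  set r := √(b / s) with hr_def
  have hsub : {y | s < k (x - y)} ⊆ Icc (x - r) (x + r) := by
    intro y hy
    suffices |x - y| ≤ r by rw [abs_le] at this; constructor <;> linarith
    rcases eq_or_ne (x - y) 0 with h0 | h0
    · simp [h0, r]
    · have hlt : s < b / (x - y) ^ 2 := lt_of_lt_of_le hy (hkb _ h0)
      rw [lt_div_iff₀ (by positivity)] at hlt
      exact Real.abs_le_sqrt ((le_div_iff₀ hs).2 (by linarith))
  calc μ {y | s < k (x - y)} ≤ μ (Icc (x - r) (x + r)) := measure_mono hsub
    _ ≤ ENNReal.ofReal (C * |x + r - (x - r)| ^ α) := hμ _ _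
    _ = ENNReal.ofReal (C * 2 ^ α * b ^ (α / 2) * s ^ (-(α / 2))) := by
      have hr : r ^ α = b ^ (α / 2) * s ^ (-(α / 2)) := by
        rw [hr_def, Real.sqrt_eq_rpow, ← Real.rpow_mul (by positivity), one_div_mul_eq_div,
          Real.div_rpow hb hs.le, Real.rpow_neg hs.le, div_eq_mul_inv]
      rw [show x + r - (x - r) = 2 * r by ring, abs_of_nonneg (by positivity),
        Real.mul_rpow zero_le_two (by positivity), hr]
      ring_nf

lemma integral_comp_sub_le (hμ : IsUniformlyHolder μ α C) (hα : α < 2) (hC : 0 ≤ C)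
    {k : ℝ → ℝ} (hk_meas : Measurable k) (hk_nonneg : ∀ u, 0 ≤ k u) {a b : ℝ} (ha : 0 ≤ a)
    (hb : 0 ≤ b) (hka : ∀ u, k u ≤ a) (hkb : ∀ u ≠ 0, k u ≤ b / u ^ 2) (x : ℝ) :
    ∫ y, k (x - y) ∂μ ≤ C * 2 ^ α * b ^ (α / 2) * a ^ (1 - α / 2) / (1 - α / 2) := by
  set c := C * 2 ^ α * b ^ (α / 2)
  have hk_sub : Measurable fun y => k (x - y) := hk_meas.comp (measurable_const.sub measurable_id)
  have hexp : -1 < -(α / 2) := by linarith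
  have hdistrib : ∀ s ∈ Ioi (0 : ℝ), μ {y | s < k (x - y)} ≤
      (Iic a).indicator (fun s => ENNReal.ofReal (c * s ^ (-(α / 2)))) s := by
    intro s hs
    by_cases hsa : s ≤ a
    · rw [indicator_of_mem (mem_Iic.2 hsa)]
      exact hμ.measure_lt_comp_sub_le hb hkb x hs
    · have hempty : {y | s < k (x - y)} = ∅ :=
        eq_empty_of_forall_notMem fun y hy => hsa (hy.le.trans (hka _))
      simp [hempty]
  have hint : IntegrableOn (fun s => c * s ^ (-(α / 2))) (Ioc 0 a) := by
    have := intervalIntegral.intervalIntegrable_rpow' hexp (a := 0) (b := a)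
    exact ((intervalIntegrable_iff_integrableOn_Ioc_of_le ha).1 this).const_mul c
  have hvalue : ∫ s in Ioc 0 a, c * s ^ (-(α / 2)) = c * a ^ (1 - α / 2) / (1 - α / 2) := by
    rw [← intervalIntegral.integral_of_le ha, intervalIntegral.integral_const_mul,
      integral_rpow (Or.inl hexp), Real.zero_rpow (by linarith),
      show -(α / 2) + 1 = 1 - α / 2 by ring]
    ring
  have hlintegral : ∫⁻ y, ENNReal.ofReal (k (x - y)) ∂μ ≤
      ENNReal.ofReal (c * a ^ (1 - α / 2) / (1 - α / 2)) :=
    calc ∫⁻ y, ENNReal.ofReal (k (x - y)) ∂μ = ∫⁻ s in Ioi 0, μ {y | s < k (x - y)} :=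
          lintegral_eq_lintegral_meas_lt μ (ae_of_all _ fun y => hk_nonneg _)
            hk_sub.aemeasurable
      _ ≤ ∫⁻ s in Ioi 0, (Iic a).indicator (fun s => ENNReal.ofReal (c * s ^ (-(α / 2)))) s :=
          setLIntegral_mono ((by fun_prop : Measurable _).indicator measurableSet_Iic) hdistrib
      _ = ∫⁻ s in Ioc 0 a, ENNReal.ofReal (c * s ^ (-(α / 2))) := by
          rw [lintegral_indicator measurableSet_Iic, Measure.restrict_restrict measurableSet_Iic,
            Iic_inter_Ioi]
      _ = _ := by
          rw [← ofReal_integral_eq_lintegral_ofReal hint, hvalue]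
          filter_upwards [ae_restrict_mem measurableSet_Ioc] with s hs
          have := hs.1
          positivity
  rw [integral_eq_lintegral_of_nonneg_ae (ae_of_all _ fun y => hk_nonneg _)
    hk_sub.aestronglyMeasurable]
  exact ENNReal.toReal_le_of_le_ofReal (div_nonneg (by positivity) (by linarith)) hlintegral

end IsUniformlyHolder

noncomputable def measureFourier (μ : Measure ℝ) (f : ℝ → ℂ) (t : ℝ) : ℂ :=
  ∫ x, cexp (-I * (x * t)) * f x ∂μ

lemma norm_cexp_neg_I_mul (x t : ℝ) : ‖cexp (-I * (x * t))‖ = 1 := by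
  rw [Complex.norm_exp]; simp

lemma cexp_neg_I_mul_sub (x y t : ℝ) :
    cexp (-I * (t * ↑(x - y))) = cexp (-I * (x * t)) * conj (cexp (-I * (y * t))) := by
  rw [← Complex.exp_conj, ← Complex.exp_add]
  congr 1
  simp only [map_mul, map_neg, Complex.conj_I, Complex.conj_ofReal]
  push_cast
  ring

section measureFourier

variable {μ : Measure ℝ} {f : ℝ → ℂ}

lemma norm_measureFourier_le (t : ℝ) : ‖measureFourier μ f t‖ ≤ ∫ x, ‖f x‖ ∂μ :=
  (norm_integral_le_integral_norm _).trans_eq <| by simp_rw [norm_mul, norm_cexp_neg_I_mul, one_mul]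

lemma continuous_measureFourier (hf : Integrable f μ) : Continuous (measureFourier μ f) :=
  continuous_of_dominated (bound := fun x => ‖f x‖)
    (fun t => ((by fun_prop : Continuous fun x : ℝ => cexp (-I * (x * t))).aestronglyMeasurable).mul
      hf.aestronglyMeasurable)
    (fun t => ae_of_all _ fun x => by rw [norm_mul, norm_cexp_neg_I_mul, one_mul]) hf.norm
    (ae_of_all _ fun x => by fun_prop)

lemma integrable_mul_norm_sq_measureFourier {w : ℝ → ℝ} (hw : Integrable w)
    (hf : Integrable f μ) :
    Integrable (fun t => w t * ‖measureFourier μ f t‖ ^ 2) :=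
  hw.mul_bdd ((continuous_measureFourier hf).norm.pow 2).aestronglyMeasurable
    (ae_of_all _ fun t => by
      rw [norm_pow, norm_norm]
      exact pow_le_pow_left₀ (norm_nonneg _) (norm_measureFourier_le t) 2)

lemma integral_mul_norm_sq_measureFourier [SFinite μ] {w : ℝ → ℝ} (hw : Integrable w)
    (hf : Integrable f μ) :
    ((∫ t, w t * ‖measureFourier μ f t‖ ^ 2 : ℝ) : ℂ) =
      ∫ p, measureFourier volume (fun t => (w t : ℂ)) (p.1 - p.2) * (f p.1 * conj (f p.2))
        ∂μ.prod μ := by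
  set G : ℝ → ℝ × ℝ → ℂ := fun t p =>
    cexp (-I * (t * ↑(p.1 - p.2))) * (w t : ℂ) * (f p.1 * conj (f p.2))
  have hG_int : Integrable (Function.uncurry G) (volume.prod (μ.prod μ)) := by
    refine (hw.norm.mul_prod (hf.norm.mul_prod hf.norm)).mono' ?_ (ae_of_all _ fun q => ?_)
    · exact (((by fun_prop : Continuous fun q : ℝ × ℝ × ℝ => cexp (-I * (q.1 * ↑(q.2.1 - q.2.2))))
        ).aestronglyMeasurable.mul (Complex.continuous_ofReal.comp_aestronglyMeasurable
          hw.aestronglyMeasurable).comp_fst).mul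
        (hf.aestronglyMeasurable.comp_fst.mul (Complex.continuous_conj.comp_aestronglyMeasurable
          hf.aestronglyMeasurable).comp_snd).comp_snd
    · simp only [Function.uncurry, G, norm_mul, norm_cexp_neg_I_mul, Complex.norm_real,
        RCLike.norm_conj, one_mul, le_refl]
  have hG_t : ∀ t, ∫ p, G t p ∂μ.prod μ = ((w t * ‖measureFourier μ f t‖ ^ 2 : ℝ) : ℂ) := by
    intro t
    calc ∫ p, G t p ∂μ.prod μ = ∫ p, (w t : ℂ) * ((cexp (-I * (p.1 * t)) * f p.1) *
          conj (cexp (-I * (p.2 * t)) * f p.2)) ∂μ.prod μ := by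
          refine integral_congr_ae (ae_of_all _ fun p => ?_)
          simp only [G, cexp_neg_I_mul_sub, map_mul]
          ring
      _ = (w t : ℂ) * (measureFourier μ f t * conj (measureFourier μ f t)) := by
          rw [integral_const_mul, integral_prod_mul (fun x : ℝ => cexp (-I * (x * t)) * f x)
            (fun y : ℝ => conj (cexp (-I * (y * t)) * f y)), integral_conj]
          rfl
      _ = ((w t * ‖measureFourier μ f t‖ ^ 2 : ℝ) : ℂ) := by
          rw [Complex.mul_conj']; push_cast; rfl
  calc ((∫ t, w t * ‖measureFourier μ f t‖ ^ 2 : ℝ) : ℂ)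
      = ∫ t, ∫ p, G t p ∂μ.prod μ := by
        rw [← integral_complex_ofReal]; exact integral_congr_ae (ae_of_all _ fun t => (hG_t t).symm)
    _ = ∫ p, (∫ t, G t p) ∂μ.prod μ := integral_integral_swap hG_int
    _ = _ := integral_congr_ae (ae_of_all _ fun p => integral_mul_const _ _)

end measureFourier

lemma norm_integral_kernel_mul_conj_le {μ : Measure ℝ} [IsFiniteMeasure μ] {f : ℝ → ℂ}
    (hf : MemLp f 2 μ) {K : ℝ → ℂ} {k : ℝ → ℝ} (hk_meas : Measurable k)
    (hk_neg : ∀ u, k (-u) = k u) {A B : ℝ} (hkA : ∀ u, k u ≤ A) (hkB : ∀ x, ∫ y, k (x - y) ∂μ ≤ B)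
    (hK : ∀ u, ‖K u‖ ≤ k u) :
    ‖∫ p, K (p.1 - p.2) * (f p.1 * conj (f p.2)) ∂μ.prod μ‖ ≤ B * ∫ x, ‖f x‖ ^ 2 ∂μ := by
  set ψ : ℝ × ℝ → ℝ := fun p => ‖f p.1‖ ^ 2 * k (p.1 - p.2)
  have hk_nonneg : ∀ u, 0 ≤ k u := fun u => (norm_nonneg _).trans (hK u)
  have hf_sq : Integrable (fun x => ‖f x‖ ^ 2) μ := (memLp_two_iff_integrable_sq_norm hf.1).1 hf
  have hψ_int : Integrable ψ (μ.prod μ) := by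
    refine ((hf_sq.mul_prod (integrable_const (1 : ℝ))).const_mul A).mono'
      (hf_sq.aestronglyMeasurable.comp_fst.mul
        (hk_meas.comp (measurable_fst.sub measurable_snd)).aestronglyMeasurable)
      (ae_of_all _ fun p => ?_)
    rw [Real.norm_of_nonneg (mul_nonneg (sq_nonneg _) (hk_nonneg _)), mul_one, mul_comm A]
    exact mul_le_mul_of_nonneg_left (hkA _) (sq_nonneg _)
  have hψ_swap : Integrable (fun p => ψ p.swap) (μ.prod μ) := hψ_int.swap
  have hψ_le : ∫ p, ψ p ∂μ.prod μ ≤ B * ∫ x, ‖f x‖ ^ 2 ∂μ := by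
    rw [integral_prod _ hψ_int, ← integral_const_mul]
    refine integral_mono hψ_int.integral_prod_left (hf_sq.const_mul B) fun x => ?_
    simp only [ψ]
    rw [integral_const_mul, mul_comm B]
    exact mul_le_mul_of_nonneg_left (hkB x) (sq_nonneg _)
  have hpointwise : ∀ p : ℝ × ℝ,
      ‖K (p.1 - p.2) * (f p.1 * conj (f p.2))‖ ≤ (ψ p + ψ p.swap) / 2 := by
    intro p
    have hswap : ψ p.swap = ‖f p.2‖ ^ 2 * k (p.1 - p.2) := by
      simp only [ψ, Prod.fst_swap, Prod.snd_swap, ← hk_neg (p.2 - p.1), neg_sub]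
    rw [hswap, norm_mul, norm_mul, RCLike.norm_conj]
    nlinarith [hK (p.1 - p.2), hk_nonneg (p.1 - p.2), two_mul_le_add_sq ‖f p.1‖ ‖f p.2‖,
      mul_nonneg (norm_nonneg (f p.1)) (norm_nonneg (f p.2))]
  calc ‖∫ p, K (p.1 - p.2) * (f p.1 * conj (f p.2)) ∂μ.prod μ‖
      ≤ ∫ p, (ψ p + ψ p.swap) / 2 ∂μ.prod μ :=
        norm_integral_le_of_norm_le ((hψ_int.add hψ_swap).div_const 2)
          (ae_of_all _ hpointwise)
    _ = ∫ p, ψ p ∂μ.prod μ := by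
        rw [integral_div, integral_add hψ_int hψ_swap, integral_prod_swap ψ]
        ring
    _ ≤ B * ∫ x, ‖f x‖ ^ 2 ∂μ := hψ_le

noncomputable def gaussianWeight (T t : ℝ) : ℝ := Real.exp (-(t / T) ^ 2)

lemma integrable_gaussianWeight {T : ℝ} (hT : T ≠ 0) : Integrable (gaussianWeight T) := by
  have h := integrable_exp_neg_mul_sq (b := (T ^ 2)⁻¹) (by positivity)
  refine h.congr (ae_of_all _ fun t => ?_)
  simp only [gaussianWeight, div_pow, neg_mul, inv_mul_eq_div]

noncomputable def gaussianKernel (T u : ℝ) : ℝ := √π * T * Real.exp (-(u * T) ^ 2 / 4)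

lemma measureFourier_gaussian {T : ℝ} (hT : 0 < T) (u : ℝ) :
    measureFourier volume (fun t => (gaussianWeight T t : ℂ)) u = gaussianKernel T u := by
  have hb : 0 < ((T : ℂ) ^ 2)⁻¹.re := by norm_cast; positivity
  have hsqrt : ((π : ℂ) / ((T : ℂ) ^ 2)⁻¹) ^ (1 / 2 : ℂ) = √π * T := by
    rw [div_inv_eq_mul, show (π : ℂ) * T ^ 2 = ((π * T ^ 2 : ℝ) : ℂ) by push_cast; ring,
      show (1 / 2 : ℂ) = ((1 / 2 : ℝ) : ℂ) by norm_num, ← Complex.ofReal_cpow (by positivity),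
      ← Real.sqrt_eq_rpow, Real.sqrt_mul Real.pi_pos.le, Real.sqrt_sq hT.le]
    push_cast; ring
  calc measureFourier volume (fun t => (gaussianWeight T t : ℂ)) u
      = ∫ t : ℝ, cexp (I * (-u : ℂ) * t) * cexp (-((T : ℂ) ^ 2)⁻¹ * t ^ 2) := by
        refine integral_congr_ae (ae_of_all _ fun t => ?_)
        push_cast [gaussianWeight]
        ring_nf
    _ = gaussianKernel T u := by
        rw [fourierIntegral_gaussian hb, hsqrt, gaussianKernel]
        push_cast
        congr 2
        field_simp

section gaussianKernel

variable {T : ℝ}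

lemma gaussianKernel_nonneg (hT : 0 ≤ T) (u : ℝ) : 0 ≤ gaussianKernel T u := by
  unfold gaussianKernel; positivity

lemma gaussianKernel_le (hT : 0 ≤ T) (u : ℝ) : gaussianKernel T u ≤ √π * T :=
  mul_le_of_le_one_right (by positivity) (Real.exp_le_one_iff.2 (by nlinarith [sq_nonneg (u * T)]))

lemma gaussianKernel_le_div_sq (hT : 0 < T) {u : ℝ} (hu : u ≠ 0) :
    gaussianKernel T u ≤ 4 * √π / T / u ^ 2 := by
  have hv : 0 < (u * T) ^ 2 / 4 := by positivity
  have hexp : Real.exp (-(u * T) ^ 2 / 4) ≤ ((u * T) ^ 2 / 4)⁻¹ := by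
    rw [neg_div, Real.exp_neg]
    exact inv_anti₀ hv ((le_add_of_nonneg_right zero_le_one).trans (Real.add_one_le_exp _))
  calc gaussianKernel T u ≤ √π * T * ((u * T) ^ 2 / 4)⁻¹ :=
        mul_le_mul_of_nonneg_left hexp (by positivity)
    _ = 4 * √π / T / u ^ 2 := by field_simp

lemma gaussianKernel_neg (T u : ℝ) : gaussianKernel T (-u) = gaussianKernel T u := by
  simp [gaussianKernel]

lemma continuous_gaussianKernel (T : ℝ) : Continuous (gaussianKernel T) := by
  unfold gaussianKernel; fun_prop

end gaussianKernel

lemma IsUniformlyHolder.exists_integral_gaussianKernel_le {μ : Measure ℝ} {α C : ℝ}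
    (hμ : IsUniformlyHolder μ α C) (hα : α < 2) (hC : 0 < C) :
    ∃ c > 0, ∀ T > 0, ∀ x, ∫ y, gaussianKernel T (x - y) ∂μ ≤ c * T ^ (1 - α) := by
  have hα' : 0 < 1 - α / 2 := by linarith
  refine ⟨C * 2 ^ α * (4 * √π) ^ (α / 2) * √π ^ (1 - α / 2) / (1 - α / 2), by positivity,
    fun T hT x => ?_⟩
  have hpow : (4 * √π / T) ^ (α / 2) * (√π * T) ^ (1 - α / 2) =
      (4 * √π) ^ (α / 2) * √π ^ (1 - α / 2) * T ^ (1 - α) := by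
    have hTpow : T ^ (1 - α) = T ^ (1 - α / 2) / T ^ (α / 2) := by
      rw [← Real.rpow_sub hT]; ring_nf
    rw [Real.div_rpow (by positivity) hT.le, Real.mul_rpow (by positivity) hT.le, hTpow]
    ring
  calc ∫ y, gaussianKernel T (x - y) ∂μ
      ≤ C * 2 ^ α * (4 * √π / T) ^ (α / 2) * (√π * T) ^ (1 - α / 2) / (1 - α / 2) :=
        hμ.integral_comp_sub_le hα hC.le (continuous_gaussianKernel T).measurable
          (gaussianKernel_nonneg hT.le) (by positivity) (by positivity) (gaussianKernel_le hT.le)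
          (fun _ hu => gaussianKernel_le_div_sq hT hu) x
    _ = _ := by rw [mul_assoc _ (_ ^ _), hpow]; ring

lemma setIntegral_Ioc_le_exp_one_mul_integral_gaussianWeight {g : ℝ → ℝ} (hg : ∀ t, 0 ≤ g t)
    {T : ℝ} (hT : 0 < T) (hwg : Integrable (fun t => gaussianWeight T t * g t)) :
    ∫ t in Ioc 0 T, g t ≤ Real.exp 1 * ∫ t, gaussianWeight T t * g t := by
  have hweight : ∀ t ∈ Ioc 0 T, 1 ≤ Real.exp 1 * gaussianWeight T t := by
    intro t ht
    have hle : (t / T) ^ 2 ≤ 1 :=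
      pow_le_one₀ (div_nonneg ht.1.le hT.le) ((div_le_one hT).2 ht.2)
    rw [gaussianWeight, ← Real.exp_add, Real.one_le_exp_iff]
    linarith
  calc ∫ t in Ioc 0 T, g t ≤ ∫ t in Ioc 0 T, Real.exp 1 * (gaussianWeight T t * g t) :=
        integral_mono_of_nonneg (ae_of_all _ hg) (hwg.const_mul _).integrableOn
          ((ae_restrict_mem measurableSet_Ioc).mono fun t ht => by
            nlinarith [hweight t ht, hg t])
    _ ≤ ∫ t, Real.exp 1 * (gaussianWeight T t * g t) :=
        setIntegral_le_integral (hwg.const_mul _)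
          (ae_of_all _ fun t => by unfold gaussianWeight; have := hg t; positivity)
    _ = Real.exp 1 * ∫ t, gaussianWeight T t * g t := integral_const_mul _ _

lemma IsUniformlyHolder.exists_integral_gaussianWeight_mul_norm_sq_le {μ : Measure ℝ}
    [IsFiniteMeasure μ] {α C : ℝ} (hμ : IsUniformlyHolder μ α C) (hα : α < 2) (hC : 0 < C) :
    ∃ c > 0, ∀ f : ℝ → ℂ, MemLp f 2 μ → ∀ T > 0,
      ∫ t, gaussianWeight T t * ‖measureFourier μ f t‖ ^ 2 ≤
        c * T ^ (1 - α) * ∫ x, ‖f x‖ ^ 2 ∂μ := by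
  obtain ⟨c, hc, hkernel⟩ := hμ.exists_integral_gaussianKernel_le hα hC
  refine ⟨c, hc, fun f hf T hT => ?_⟩
  have henergy := integral_mul_norm_sq_measureFourier (integrable_gaussianWeight hT.ne')
    (hf.integrable one_le_two)
  simp_rw [measureFourier_gaussian hT] at henergy
  calc ∫ t, gaussianWeight T t * ‖measureFourier μ f t‖ ^ 2
      = ‖((∫ t, gaussianWeight T t * ‖measureFourier μ f t‖ ^ 2 : ℝ) : ℂ)‖ := by
        rw [Complex.norm_real, Real.norm_of_nonneg (integral_nonneg fun t => by
          unfold gaussianWeight; positivity)]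
    _ ≤ c * T ^ (1 - α) * ∫ x, ‖f x‖ ^ 2 ∂μ :=
        henergy ▸ norm_integral_kernel_mul_conj_le hf (continuous_gaussianKernel T).measurable
          (gaussianKernel_neg T) (gaussianKernel_le hT.le) (hkernel T hT)
          (fun u => by rw [Complex.norm_real, Real.norm_of_nonneg (gaussianKernel_nonneg hT.le u)])

lemma memLp_two_of_lintegral_sq_lt_top {X E : Type*} [MeasurableSpace X] [NormedAddCommGroup E]
    {μ : Measure X} {f : X → E} (hf : AEStronglyMeasurable f μ)
    (h : ∫⁻ x, (‖f x‖₊ : ℝ≥0∞) ^ 2 ∂μ < ⊤) :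
    MemLp f 2 μ := by
  refine ⟨hf, ?_⟩
  rw [eLpNorm_lt_top_iff_lintegral_rpow_enorm_lt_top two_ne_zero ENNReal.ofNat_ne_top]
  simpa [enorm_eq_nnnorm] using h

/-- **Strichartz estimate.** Let `α ∈ (0,1]` and let `μ` be a finite Borel
measure on `ℝ` which is uniformly `α`-Hölder with constant `C > 0`. Then there is
`C₁ > 0`, depending only on `α` and `C`, such that for every Borel measurable
`f : ℝ → ℂ` with `∫ |f|² dμ < ∞` and every `T > 0`,
`(1/T) ∫₀^T |∫ e^{−ixt} f(x) dμ(x)|² dt ≤ C₁ (∫ |f|² dμ) T^{−α}`. -/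
theorem strichartz_uniformly_holder
    (α : ℝ) (hα : α ∈ Ioc (0 : ℝ) 1)
    (μ : Measure ℝ) [IsFiniteMeasure μ]
    (C : ℝ) (hC : 0 < C)
    (hUαH : ∀ a b : ℝ, μ (Icc a b) ≤ ENNReal.ofReal (C * |b - a| ^ α)) :
    ∃ C₁ : ℝ, 0 < C₁ ∧
      ∀ f : ℝ → ℂ, Measurable f → (∫⁻ x, (‖f x‖₊ : ℝ≥0∞) ^ 2 ∂μ) < ⊤ →
      ∀ T : ℝ, 0 < T →
        (1 / T) * ∫ t in Ioc (0 : ℝ) T,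
            ‖∫ x : ℝ, Complex.exp ((-Complex.I) * ((x : ℂ) * (t : ℂ))) * f x ∂μ‖ ^ 2
          ≤ C₁ * (∫ x, ‖f x‖ ^ 2 ∂μ) * T ^ (-α) := by
  obtain ⟨c, hc, hbound⟩ :=
    IsUniformlyHolder.exists_integral_gaussianWeight_mul_norm_sq_le hUαH (by linarith [hα.2]) hC
  refine ⟨Real.exp 1 * c, by positivity, fun f hf_meas hf_sq T hT => ?_⟩
  have hf : MemLp f 2 μ := memLp_two_of_lintegral_sq_lt_top hf_meas.aestronglyMeasurable hf_sq
  have hT_pow : T ^ (1 - α) = T * T ^ (-α) := by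
    rw [sub_eq_add_neg, Real.rpow_add hT, Real.rpow_one]
  calc (1 / T) * ∫ t in Ioc 0 T, ‖measureFourier μ f t‖ ^ 2
      ≤ (1 / T) * (Real.exp 1 * ∫ t, gaussianWeight T t * ‖measureFourier μ f t‖ ^ 2) := by
        gcongr
        exact setIntegral_Ioc_le_exp_one_mul_integral_gaussianWeight (fun t => by positivity) hT
          (integrable_mul_norm_sq_measureFourier (integrable_gaussianWeight hT.ne')
            (hf.integrable one_le_two))
    _ ≤ (1 / T) * (Real.exp 1 * (c * T ^ (1 - α) * ∫ x, ‖f x‖ ^ 2 ∂μ)) := by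
        gcongr
        exact hbound f hf T hT
    _ = Real.exp 1 * c * (∫ x, ‖f x‖ ^ 2 ∂μ) * T ^ (-α) := by
        rw [hT_pow]
        field_simp
end

section
/- Let α ∈ (0,1] and let μ be a finite Borel measure on ℝ. Then μ is α-continuous if and only if for every ε > 0 there exist finite Borel measures μ₁ and μ₂ on ℝ, mutually singular, such that μ = μ₁ + μ₂, μ₁ is UαH with some constant C > 0, and μ₂(ℝ) < ε. -/
open MeasureTheory Set Metric Filter
open scoped ENNReal Topology

/-!
Call `x` heavy at scales `t, δ > 0` if `μ (closedBall x r) > t rᵅ` for some `r < δ`. The heavy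
set is open, and Vitali's covering lemma covers it by balls of radius `< 4δ` whose `α`-dimensional
sizes sum to at most `8ᵅ μ(ℝ) / t`; so the points heavy at every scale form a `μH[α]`-null set.
If `μ ≪ μH[α]`, some heavy set therefore has `μ`-mass `< ε`, and `μ` restricted to its complement
is uniformly `α`-Hölder: an interval of length `L < δ` meeting the complement lies in the ball of
radius `L` around a point that is not heavy. Conversely, a uniformly `α`-Hölder measure is at most
a multiple of `μH[α]`, because every bounded set of reals lies in an interval of the same diameter.
-/

theorem ediam_closedBall_le_ofReal {X : Type*} [PseudoMetricSpace X] (x : X) {r : ℝ}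
    (hr : 0 ≤ r) : ediam (closedBall x r) ≤ ENNReal.ofReal (2 * r) := by
  rw [← closedEBall_ofReal hr, ENNReal.ofReal_mul zero_le_two, ENNReal.ofReal_ofNat]
  exact ediam_closedEBall_le

section HeavyBalls

variable {X : Type*} [MetricSpace X] [MeasurableSpace X]

def heavyBallCenters (μ : Measure X) (α t δ : ℝ) : Set X :=
  {x | ∃ r ∈ Ioo 0 δ, ENNReal.ofReal (t * r ^ α) < μ (closedBall x r)}

theorem heavyBallCenters_anti (μ : Measure X) (α : ℝ) {t t' δ δ' : ℝ} (ht : t ≤ t')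
    (hδ : δ' ≤ δ) : heavyBallCenters μ α t' δ' ⊆ heavyBallCenters μ α t δ := by
  rintro x ⟨r, hr, hμ⟩
  refine ⟨r, ⟨hr.1, hr.2.trans_le hδ⟩, lt_of_le_of_lt (ENNReal.ofReal_le_ofReal ?_) hμ⟩
  exact mul_le_mul_of_nonneg_right ht (Real.rpow_nonneg hr.1.le α)

theorem isOpen_heavyBallCenters (μ : Measure X) (α t δ : ℝ) :
    IsOpen (heavyBallCenters μ α t δ) := by
  refine Metric.isOpen_iff.2 fun x ⟨r, hr, hμ⟩ => ?_
  have hcont : ContinuousAt (fun s : ℝ => ENNReal.ofReal (t * s ^ α)) r :=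
    ENNReal.continuous_ofReal.continuousAt.comp
      (continuousAt_const.mul (Real.continuousAt_rpow_const _ _ (Or.inl hr.1.ne')))
  -- a slightly larger radius `s` still makes the ball heavy, and `closedBall y s` contains
  -- `closedBall x r` for every `y` close to `x`
  obtain ⟨s, hs, hrs, hsδ⟩ := ((hcont.eventually_lt_const hμ).filter_mono nhdsWithin_le_nhds
    |>.and (Ioo_mem_nhdsGT hr.2)).exists
  refine ⟨s - r, sub_pos.2 hrs, fun y hy => ⟨s, ⟨hr.1.trans hrs, hsδ⟩,
    hs.trans_le (measure_mono (closedBall_subset_closedBall' ?_))⟩⟩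
  linarith [mem_ball'.1 hy]

variable [TopologicalSpace.SeparableSpace X] [OpensMeasurableSpace X]

theorem exists_cover_heavyBallCenters (μ : Measure X) [IsFiniteMeasure μ] {α t δ : ℝ}
    (hα : 0 ≤ α) (ht : 0 < t) :
    ∃ (u : Set X) (ρ : X → ℝ), u.Countable ∧
      (∀ b ∈ u, ediam (closedBall b (4 * ρ b)) ≤ ENNReal.ofReal (8 * δ)) ∧
      heavyBallCenters μ α t δ ⊆ ⋃ b ∈ u, closedBall b (4 * ρ b) ∧
      ∑' b : u, ediam (closedBall (b : X) (4 * ρ b)) ^ α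
        ≤ ENNReal.ofReal (8 ^ α / t) * μ univ := by
  set H := heavyBallCenters μ α t δ
  choose! ρ hρ using fun x (hx : x ∈ H) => hx
  obtain ⟨u, huH, hdisj, hcov⟩ := Vitali.exists_disjoint_subfamily_covering_enlargement_closedBall
    H id ρ δ (fun a ha => (hρ a ha).1.2.le) 4 (by norm_num)
  simp only [id] at hdisj hcov
  have hρ_pos : ∀ b ∈ u, 0 < ρ b := fun b hb => (hρ b (huH hb)).1.1
  have hu : u.Countable := hdisj.countable_of_nonempty_interior fun b hb =>
    (nonempty_ball.2 (hρ_pos b hb)).mono ball_subset_interior_closedBall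
  have hdiam : ∀ b ∈ u, ediam (closedBall b (4 * ρ b)) ≤ ENNReal.ofReal (8 * ρ b) := fun b hb =>
    (ediam_closedBall_le_ofReal b (by linarith [hρ_pos b hb])).trans_eq (by ring_nf)
  refine ⟨u, ρ, hu, fun b hb => (hdiam b hb).trans (ENNReal.ofReal_le_ofReal ?_), ?_, ?_⟩
  · linarith [(hρ b (huH hb)).1.2]
  · intro x hx
    obtain ⟨b, hb, hxb⟩ := hcov x hx
    exact mem_biUnion hb (hxb (mem_closedBall_self (hρ x hx).1.1.le))
  have hball : ∀ b ∈ u, ediam (closedBall b (4 * ρ b)) ^ α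
      ≤ ENNReal.ofReal (8 ^ α / t) * μ (closedBall b (ρ b)) := fun b hb => calc
    _ ≤ ENNReal.ofReal (8 * ρ b) ^ α := ENNReal.rpow_le_rpow (hdiam b hb) hα
    _ = ENNReal.ofReal (8 ^ α / t) * ENNReal.ofReal (t * ρ b ^ α) := by
      rw [ENNReal.ofReal_rpow_of_pos (by linarith [hρ_pos b hb]),
        ← ENNReal.ofReal_mul (by positivity), Real.mul_rpow (by norm_num) (hρ_pos b hb).le]
      field_simp
    _ ≤ _ := by gcongr; exact (hρ b (huH hb)).2.le
  calc ∑' b : u, ediam (closedBall (b : X) (4 * ρ b)) ^ α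
      ≤ ∑' b : u, ENNReal.ofReal (8 ^ α / t) * μ (closedBall (b : X) (ρ b)) :=
        ENNReal.tsum_le_tsum fun b => hball b b.2
    _ = ENNReal.ofReal (8 ^ α / t) * μ (⋃ b ∈ u, closedBall b (ρ b)) := by
        rw [ENNReal.tsum_mul_left, measure_biUnion hu hdisj fun b _ => measurableSet_closedBall]
    _ ≤ ENNReal.ofReal (8 ^ α / t) * μ univ := by gcongr; exact subset_univ _

theorem hausdorffMeasure_le_of_subset_heavyBallCenters [BorelSpace X] (μ : Measure X)
    [IsFiniteMeasure μ] {α t : ℝ} (hα : 0 ≤ α) (ht : 0 < t) {s : Set X}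
    (hs : ∀ δ > 0, s ⊆ heavyBallCenters μ α t δ) :
    μH[α] s ≤ ENNReal.ofReal (8 ^ α / t) * μ univ := by
  choose u ρ hu hdiam hcov hsum using fun n : ℕ =>
    exists_cover_heavyBallCenters μ (δ := 1 / (n + 1)) hα ht
  have := fun n => (hu n).to_subtype
  have hδ : Tendsto (fun n : ℕ => ENNReal.ofReal (8 * (1 / (n + 1)))) atTop (𝓝 0) := by
    simpa using ENNReal.tendsto_ofReal
      ((tendsto_one_div_add_atTop_nhds_zero_nat (𝕜 := ℝ)).const_mul 8)
  calc μH[α] s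
      ≤ liminf (fun n => ∑' b : u n, ediam (closedBall (b : X) (4 * ρ n b)) ^ α) atTop :=
        Measure.hausdorffMeasure_le_liminf_tsum α s _ hδ
          (fun n (b : u n) => closedBall (b : X) (4 * ρ n b)) (.of_forall fun n b => hdiam n b b.2)
          (.of_forall fun n => (hs _ Nat.one_div_pos_of_nat).trans <| (hcov n).trans_eq
            (biUnion_eq_iUnion _ _))
    _ ≤ ENNReal.ofReal (8 ^ α / t) * μ univ := liminf_le_of_frequently_le' (.of_forall hsum)

variable [BorelSpace X]

theorem hausdorffMeasure_iInter_heavyBallCenters (μ : Measure X) [IsFiniteMeasure μ] {α : ℝ}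
    (hα : 0 ≤ α) : μH[α] (⋂ n : ℕ, heavyBallCenters μ α (n + 1) (1 / (n + 1))) = 0 := by
  have hsub : ∀ m : ℕ, ∀ δ > 0,
      ⋂ n : ℕ, heavyBallCenters μ α (n + 1) (1 / (n + 1)) ⊆ heavyBallCenters μ α (m + 1) δ := by
    intro m δ hδ
    obtain ⟨k, hk⟩ := exists_nat_one_div_lt hδ
    refine (iInter_subset _ (max k m)).trans (heavyBallCenters_anti μ α (by simp) ?_)
    exact (Nat.one_div_le_one_div (le_max_left k m)).trans hk.le
  have hlim : Tendsto (fun m : ℕ => ENNReal.ofReal (8 ^ α / (m + 1)) * μ univ) atTop (𝓝 0) := by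
    simpa [div_eq_mul_inv] using ENNReal.Tendsto.mul_const (ENNReal.tendsto_ofReal
      ((tendsto_one_div_add_atTop_nhds_zero_nat (𝕜 := ℝ)).const_mul (8 ^ α)))
      (.inr (measure_ne_top μ univ))
  exact nonpos_iff_eq_zero.1 <| ge_of_tendsto' hlim fun m =>
    hausdorffMeasure_le_of_subset_heavyBallCenters μ hα m.cast_add_one_pos (hsub m)

theorem exists_measure_heavyBallCenters_lt {μ : Measure X} [IsFiniteMeasure μ] {α : ℝ}
    (hα : 0 ≤ α) (hμ : μ ≪ μH[α]) {ε : ℝ≥0∞} (hε : 0 < ε) :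
    ∃ t δ : ℝ, 0 < t ∧ 0 < δ ∧ μ (heavyBallCenters μ α t δ) < ε := by
  have hanti : Antitone fun n : ℕ => heavyBallCenters μ α (n + 1) (1 / (n + 1)) :=
    fun m n hmn => heavyBallCenters_anti μ α (by gcongr) (Nat.one_div_le_one_div hmn)
  have hlim := tendsto_measure_iInter_atTop
    (fun n => (isOpen_heavyBallCenters μ α _ _).nullMeasurableSet) hanti ⟨0, measure_ne_top μ _⟩
  rw [hμ (hausdorffMeasure_iInter_heavyBallCenters μ hα)] at hlim
  obtain ⟨n, hn⟩ := (hlim.eventually_lt_const hε).exists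
  exact ⟨n + 1, 1 / (n + 1), n.cast_add_one_pos, Nat.one_div_pos_of_nat, hn⟩

end HeavyBalls

theorem restrict_compl_heavyBallCenters_Icc_le (μ : Measure ℝ) [IsFiniteMeasure μ]
    [NullSingletonClass μ] {α t δ : ℝ} (hα : 0 ≤ α) (ht : 0 ≤ t) (hδ : 0 < δ) (a b : ℝ) :
    μ.restrict (heavyBallCenters μ α t δ)ᶜ (Icc a b)
      ≤ ENNReal.ofReal ((t + (μ univ).toReal / δ ^ α) * |b - a| ^ α) := by
  rcases lt_or_ge b a with hba | hab
  · simp [Icc_eq_empty_of_lt hba]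
  rcases hab.eq_or_lt with rfl | hab
  · simp
  rw [Measure.restrict_apply measurableSet_Icc, abs_of_pos (sub_pos.2 hab)]
  set L := b - a
  have hL : 0 < L := sub_pos.2 hab
  rcases lt_or_ge L δ with hLδ | hLδ
  · rcases (Icc a b ∩ (heavyBallCenters μ α t δ)ᶜ).eq_empty_or_nonempty with h | ⟨x, hxI, hx⟩
    · simp [h]
    have hball : μ (closedBall x L) ≤ ENNReal.ofReal (t * L ^ α) :=
      not_lt.1 fun h => hx ⟨L, ⟨hL, hLδ⟩, h⟩
    calc μ (Icc a b ∩ (heavyBallCenters μ α t δ)ᶜ) ≤ μ (closedBall x L) := by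
          refine measure_mono (inter_subset_left.trans fun y hy => ?_)
          rw [Real.closedBall_eq_Icc]
          constructor <;> linarith [hy.1, hy.2, hxI.1, hxI.2]
      _ ≤ ENNReal.ofReal ((t + (μ univ).toReal / δ ^ α) * L ^ α) :=
          hball.trans <| ENNReal.ofReal_le_ofReal <| by
            gcongr; exact le_add_of_nonneg_right (by positivity)
  · have hpow : δ ^ α ≤ L ^ α := Real.rpow_le_rpow hδ.le hLδ hα
    calc μ (Icc a b ∩ (heavyBallCenters μ α t δ)ᶜ) ≤ μ univ := measure_mono (subset_univ _)
      _ = ENNReal.ofReal ((μ univ).toReal / δ ^ α * δ ^ α) := by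
          rw [div_mul_cancel₀ _ (Real.rpow_pos_of_pos hδ α).ne', ENNReal.ofReal_toReal
            (measure_ne_top μ univ)]
      _ ≤ ENNReal.ofReal ((t + (μ univ).toReal / δ ^ α) * L ^ α) := by
          gcongr
          exact le_add_of_nonneg_left ht

theorem absolutelyContinuous_hausdorffMeasure_of_Icc_le {μ : Measure ℝ} {α C : ℝ} (hα : 0 < α)
    (hC : 0 < C) (hμ : ∀ a b : ℝ, μ (Icc a b) ≤ ENNReal.ofReal (C * |b - a| ^ α)) :
    μ ≪ μH[α] := by
  have hC' : ENNReal.ofReal C ≠ 0 := (ENNReal.ofReal_pos.2 hC).ne'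
  suffices h : (ENNReal.ofReal C)⁻¹ • μ ≤ μH[α] from
    (Measure.absolutelyContinuous_smul (ENNReal.inv_ne_zero.2 ENNReal.ofReal_ne_top)).trans
      h.absolutelyContinuous
  refine Measure.le_hausdorffMeasure α _ ⊤ ENNReal.zero_lt_top fun s _ => ?_
  rw [Measure.smul_apply, smul_eq_mul, ENNReal.inv_mul_le_iff hC' ENNReal.ofReal_ne_top]
  by_cases hs : Bornology.IsBounded s
  · have hlen : 0 ≤ sSup s - sInf s := sub_nonneg.2 (Real.sInf_le_sSup s hs.bddBelow hs.bddAbove)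
    calc μ s ≤ μ (Icc (sInf s) (sSup s)) := measure_mono hs.subset_Icc_sInf_sSup
      _ ≤ ENNReal.ofReal (C * |sSup s - sInf s| ^ α) := hμ _ _
      _ = ENNReal.ofReal C * ediam s ^ α := by
        rw [Real.ediam_eq hs, abs_of_nonneg hlen, ENNReal.ofReal_mul hC.le,
          ENNReal.ofReal_rpow_of_nonneg hlen hα.le]
  · rw [ediam_eq_top_iff_unbounded.2 hs, ENNReal.top_rpow_of_pos hα, ENNReal.mul_top hC']
    exact le_top

/-- **Rogers–Taylor decomposition.** Let `α ∈ (0,1]` and `μ` a finite Borel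
measure on `ℝ`. Then `μ` is `α`-continuous (gives zero weight to every Borel set of zero
`α`-dimensional Hausdorff measure) if and only if for every `ε > 0` there are mutually
singular finite Borel measures `μ₁, μ₂` with `μ = μ₁ + μ₂`, `μ₁` uniformly `α`-Hölder
with some constant `C > 0`, and `μ₂(ℝ) < ε`. -/
theorem alpha_continuous_iff_UalphaHolder_decomposition
    (α : ℝ) (hα : α ∈ Ioc (0 : ℝ) 1)
    (μ : Measure ℝ) [IsFiniteMeasure μ] :
    (∀ A : Set ℝ, MeasurableSet A → μH[α] A = 0 → μ A = 0) ↔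
      (∀ ε : ℝ, 0 < ε →
        ∃ (μ₁ μ₂ : Measure ℝ), IsFiniteMeasure μ₁ ∧ IsFiniteMeasure μ₂ ∧
          μ₁.MutuallySingular μ₂ ∧ μ = μ₁ + μ₂ ∧
          (∃ C : ℝ, 0 < C ∧ ∀ a b : ℝ, μ₁ (Icc a b) ≤ ENNReal.ofReal (C * |b - a| ^ α)) ∧
          μ₂ univ < ENNReal.ofReal ε) := by
  constructor
  · intro hμ ε hε
    have hac : μ ≪ μH[α] := Measure.AbsolutelyContinuous.mk fun A hA => hμ A hA
    have : NullSingletonClass μ := ⟨fun x => hac <|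
      (Measure.hausdorffMeasure_zero_or_top hα.1 {x}).resolve_right (by simp)⟩
    obtain ⟨t, δ, ht, hδ, hH_small⟩ :=
      exists_measure_heavyBallCenters_lt hα.1.le hac (ENNReal.ofReal_pos.2 hε)
    set H := heavyBallCenters μ α t δ
    have hH : MeasurableSet H := (isOpen_heavyBallCenters μ α t δ).measurableSet
    refine ⟨μ.restrict Hᶜ, μ.restrict H, inferInstance, inferInstance,
      ⟨H, hH, by simp [Measure.restrict_apply hH], by simp [Measure.restrict_apply hH.compl]⟩,
      (Measure.restrict_compl_add_restrict hH).symm,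
      ⟨_, by positivity, restrict_compl_heavyBallCenters_Icc_le μ hα.1.le ht.le hδ⟩,
      by rwa [Measure.restrict_apply_univ]⟩
  · intro h A _ hA
    by_contra hA_pos
    obtain ⟨ε, -, hε, hεA⟩ := ENNReal.lt_iff_exists_real_btwn.1 (pos_iff_ne_zero.2 hA_pos)
    obtain ⟨μ₁, μ₂, -, -, -, rfl, ⟨C, hC, hμ₁⟩, hμ₂⟩ := h ε (ENNReal.ofReal_pos.1 hε)
    have hμ₁A : μ₁ A = 0 := absolutelyContinuous_hausdorffMeasure_of_Icc_le hα.1 hC hμ₁ hA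
    refine hεA.not_ge ?_
    calc (μ₁ + μ₂) A = μ₂ A := by rw [Measure.add_apply, hμ₁A, zero_add]
      _ ≤ μ₂ univ := measure_mono (subset_univ A)
      _ ≤ ENNReal.ofReal ε := hμ₂.le
end
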